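/- arXiv:1810.01218 — 3 statements merged into one kernel-verified Lean document; each statement's English description precedes it below -/
import Mathlib

section
/- (Weyl's inequality) Let A and B be N×N Hermitian matrices with eigenvalues λ_1 ≥ ... ≥ λ_N and μ_1 ≥ ... ≥ μ_N respectively, and let C = A + B with eigenvalues ν_1 ≥ ... ≥ ν_N. Then for indices i, j ≥ 0 with i + j + 1 ≤ N: ν_{i+j+1} ≤ λ_{i+1} + μ_{j+1}, and ν_{N−i−j} ≥ λ_{N−i} + μ_{N−j}. -/
/-!
Pick `x ≠ 0` in the span of the eigenvectors of `A` with eigenvalue `≤ λ_{i+1}` (dimension at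
least `N - i`), in the analogous span for `B` (at least `N - j`), and in the span of the
eigenvectors of `C` with eigenvalue `≥ ν_{i+j+1}` (at least `i + j + 1`): these dimensions add up
to more than `2N`, so the three subspaces meet nontrivially. Expanding `x` in each eigenbasis gives
`ν_{i+j+1} ‖x‖² ≤ ⟪x, C x⟫ = ⟪x, A x⟫ + ⟪x, B x⟫ ≤ (λ_{i+1} + μ_{j+1}) ‖x‖²`.
The lower bound is the same argument with all inequalities reversed.
-/

open Finset Module Submodule
open scoped InnerProductSpace

variable {𝕜 E ι : Type*} [RCLike 𝕜] [NormedAddCommGroup E] [InnerProductSpace 𝕜 E] [Fintype ι]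

namespace OrthonormalBasis

variable {T : E →ₗ[𝕜] E} {d : ι → ℝ} {S : Finset ι} {a : ℝ} {x : E}

lemma apply_eq_sum_of_apply_eq_smul (b : OrthonormalBasis ι 𝕜 E)
    (hT : ∀ i, T (b i) = (d i : 𝕜) • b i) (x : E) :
    T x = ∑ i, ((d i : 𝕜) * ⟪b i, x⟫_𝕜) • b i := by
  conv_lhs => rw [← b.sum_repr' x]
  simp only [map_sum, map_smul, hT, smul_smul, mul_comm]

lemma re_inner_apply_self_eq_sum (b : OrthonormalBasis ι 𝕜 E)
    (hT : ∀ i, T (b i) = (d i : 𝕜) • b i) (x : E) :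
    RCLike.re ⟪x, T x⟫_𝕜 = ∑ i, d i * ‖⟪b i, x⟫_𝕜‖ ^ 2 := by
  rw [b.apply_eq_sum_of_apply_eq_smul hT, inner_sum, map_sum]
  refine Fintype.sum_congr _ _ fun i => ?_
  rw [inner_smul_right, ← inner_conj_symm x (b i), mul_assoc, RCLike.mul_conj]
  norm_cast

lemma inner_eq_zero_of_mem_span_image (b : OrthonormalBasis ι 𝕜 E) {s : Set ι}
    (hx : x ∈ span 𝕜 (b '' s)) {i : ι} (hi : i ∉ s) : ⟪b i, x⟫_𝕜 = 0 := by
  rw [← b.repr_apply_apply, ← b.coe_toBasis_repr_apply]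
  rw [← b.coe_toBasis, Basis.mem_span_image] at hx
  exact Finsupp.notMem_support_iff.mp fun h => hi (hx h)

lemma finrank_span_image (b : OrthonormalBasis ι 𝕜 E) (S : Finset ι) :
    finrank 𝕜 (span 𝕜 (b '' S)) = #S := by
  rw [Set.image_eq_range, finrank_span_eq_card]
  · simp
  · exact b.orthonormal.linearIndependent.comp _ Subtype.val_injective

lemma re_inner_apply_self_le (b : OrthonormalBasis ι 𝕜 E) (hT : ∀ i, T (b i) = (d i : 𝕜) • b i)
    (hd : ∀ i ∈ S, d i ≤ a) (hx : x ∈ span 𝕜 (b '' S)) :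
    RCLike.re ⟪x, T x⟫_𝕜 ≤ a * ‖x‖ ^ 2 := by
  rw [b.re_inner_apply_self_eq_sum hT, ← b.sum_sq_norm_inner_right, Finset.mul_sum]
  refine sum_le_sum fun i _ => ?_
  by_cases hi : i ∈ S
  · exact mul_le_mul_of_nonneg_right (hd i hi) (by positivity)
  · simp [b.inner_eq_zero_of_mem_span_image hx (mod_cast hi)]

lemma le_re_inner_apply_self (b : OrthonormalBasis ι 𝕜 E) (hT : ∀ i, T (b i) = (d i : 𝕜) • b i)
    (hd : ∀ i ∈ S, a ≤ d i) (hx : x ∈ span 𝕜 (b '' S)) :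
    a * ‖x‖ ^ 2 ≤ RCLike.re ⟪x, T x⟫_𝕜 := by
  rw [b.re_inner_apply_self_eq_sum hT, ← b.sum_sq_norm_inner_right, Finset.mul_sum]
  refine sum_le_sum fun i _ => ?_
  by_cases hi : i ∈ S
  · exact mul_le_mul_of_nonneg_right (hd i hi) (by positivity)
  · simp [b.inner_eq_zero_of_mem_span_image hx (mod_cast hi)]

end OrthonormalBasis

lemma Submodule.inf_inf_ne_bot_of_two_mul_finrank_lt {K V : Type*} [DivisionRing K]
    [AddCommGroup V] [Module K V] [FiniteDimensional K V] (U₁ U₂ U₃ : Submodule K V)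
    (h : 2 * finrank K V < finrank K U₁ + finrank K U₂ + finrank K U₃) : U₁ ⊓ U₂ ⊓ U₃ ≠ ⊥ := by
  have h₁₂ := finrank_sup_add_finrank_inf_eq U₁ U₂
  have h₁₂₃ := finrank_sup_add_finrank_inf_eq (U₁ ⊓ U₂) U₃
  have := (U₁ ⊔ U₂).finrank_le
  have := (U₁ ⊓ U₂ ⊔ U₃).finrank_le
  rw [Ne, ← finrank_eq_zero]
  omega

lemma OrthonormalBasis.exists_ne_zero_mem_span_image₃ (b₁ b₂ b₃ : OrthonormalBasis ι 𝕜 E)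
    {S₁ S₂ S₃ : Finset ι} (h : 2 * finrank 𝕜 E < #S₁ + #S₂ + #S₃) :
    ∃ x ≠ 0, x ∈ span 𝕜 (b₁ '' S₁) ∧ x ∈ span 𝕜 (b₂ '' S₂) ∧ x ∈ span 𝕜 (b₃ '' S₃) := by
  have := b₁.toBasis.finiteDimensional_of_finite
  have hspan := inf_inf_ne_bot_of_two_mul_finrank_lt
    (span 𝕜 (b₁ '' S₁)) (span 𝕜 (b₂ '' S₂)) (span 𝕜 (b₃ '' S₃))
    (by simpa only [finrank_span_image] using h)
  obtain ⟨x, ⟨⟨hx₁, hx₂⟩, hx₃⟩, hx⟩ := exists_mem_ne_zero_of_ne_bot hspan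
  exact ⟨x, hx, hx₁, hx₂, hx₃⟩

section Weyl

variable {T₁ T₂ : E →ₗ[𝕜] E} {d₁ d₂ d₃ : ι → ℝ} {a b c : ℝ}

lemma le_add_of_two_mul_finrank_lt (b₁ b₂ b₃ : OrthonormalBasis ι 𝕜 E)
    (h₁ : ∀ i, T₁ (b₁ i) = (d₁ i : 𝕜) • b₁ i) (h₂ : ∀ i, T₂ (b₂ i) = (d₂ i : 𝕜) • b₂ i)
    (h₃ : ∀ i, (T₁ + T₂) (b₃ i) = (d₃ i : 𝕜) • b₃ i)
    (hcard : 2 * finrank 𝕜 E < #{i | d₁ i ≤ a} + #{i | d₂ i ≤ b} + #{i | c ≤ d₃ i}) :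
    c ≤ a + b := by
  obtain ⟨x, hx, hx₁, hx₂, hx₃⟩ := b₁.exists_ne_zero_mem_span_image₃ b₂ b₃ hcard
  have hA := b₁.re_inner_apply_self_le h₁ (fun i hi => (mem_filter.mp hi).2) hx₁
  have hB := b₂.re_inner_apply_self_le h₂ (fun i hi => (mem_filter.mp hi).2) hx₂
  have hC := b₃.le_re_inner_apply_self h₃ (fun i hi => (mem_filter.mp hi).2) hx₃
  rw [LinearMap.add_apply, inner_add_right, map_add] at hC
  refine le_of_mul_le_mul_right ?_ (pow_pos (norm_pos_iff.mpr hx) 2)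
  linarith

lemma add_le_of_two_mul_finrank_lt (b₁ b₂ b₃ : OrthonormalBasis ι 𝕜 E)
    (h₁ : ∀ i, T₁ (b₁ i) = (d₁ i : 𝕜) • b₁ i) (h₂ : ∀ i, T₂ (b₂ i) = (d₂ i : 𝕜) • b₂ i)
    (h₃ : ∀ i, (T₁ + T₂) (b₃ i) = (d₃ i : 𝕜) • b₃ i)
    (hcard : 2 * finrank 𝕜 E < #{i | a ≤ d₁ i} + #{i | b ≤ d₂ i} + #{i | d₃ i ≤ c}) :
    a + b ≤ c := by
  obtain ⟨x, hx, hx₁, hx₂, hx₃⟩ := b₁.exists_ne_zero_mem_span_image₃ b₂ b₃ hcard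
  have hA := b₁.le_re_inner_apply_self h₁ (fun i hi => (mem_filter.mp hi).2) hx₁
  have hB := b₂.le_re_inner_apply_self h₂ (fun i hi => (mem_filter.mp hi).2) hx₂
  have hC := b₃.re_inner_apply_self_le h₃ (fun i hi => (mem_filter.mp hi).2) hx₃
  rw [LinearMap.add_apply, inner_add_right, map_add] at hC
  refine le_of_mul_le_mul_right ?_ (pow_pos (norm_pos_iff.mpr hx) 2)
  linarith

end Weyl

lemma card_filter_comp_eq_of_map_eq {α κ : Type*} [Fintype κ] {f : ι → α} {g : κ → α}
    (h : univ.val.map f = univ.val.map g) (p : α → Prop) [DecidablePred p] :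
    #{i | p (f i)} = #{i | p (g i)} := by
  have := congrArg (fun s => Multiset.card (s.filter p)) h
  simp only [Multiset.filter_map, Multiset.card_map] at this
  exact this

section Antitone

variable {α : Type*} [Preorder α] [DecidableLE α] {n : ℕ} {f : Fin n → α} {g : ι → α}

lemma Antitone.sub_le_card_filter_le (hf : Antitone f) (hfg : univ.val.map f = univ.val.map g)
    (r : Fin n) : n - r ≤ #{i | g i ≤ f r} := by
  rw [← card_filter_comp_eq_of_map_eq hfg (· ≤ f r), ← Fin.card_Ici]
  exact card_le_card fun i hi => by simpa using hf (mem_Ici.mp hi)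

lemma Antitone.add_one_le_card_filter_ge (hf : Antitone f) (hfg : univ.val.map f = univ.val.map g)
    (r : Fin n) : r + 1 ≤ #{i | f r ≤ g i} := by
  rw [← card_filter_comp_eq_of_map_eq hfg (f r ≤ ·), ← Fin.card_Iic]
  exact card_le_card fun i hi => by simpa using hf (mem_Iic.mp hi)

end Antitone

lemma Matrix.IsHermitian.toEuclideanLin_eigenvectorBasis {n : Type*} [Fintype n] [DecidableEq n]
    {A : Matrix n n 𝕜} (hA : A.IsHermitian) (i : n) :
    toEuclideanLin A (hA.eigenvectorBasis i) = (hA.eigenvalues i : 𝕜) • hA.eigenvectorBasis i := by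
  ext j
  have := congrFun (hA.mulVec_eigenvectorBasis i) j
  simp only [toLpLin_apply] at this ⊢
  rw [this, RCLike.real_smul_eq_coe_smul (K := 𝕜)]
  rfl

/-- Weyl's inequalities: for Hermitian `A`, `B`, `C = A + B` with eigenvalues
listed in nonincreasing order `λ`, `μ`, `ν`, for 0-based indices `i`, `j` with
`i + j < N`: `ν_{i+j+1} ≤ λ_{i+1} + μ_{j+1}` and `ν_{N−i−j} ≥ λ_{N−i} + μ_{N−j}`. -/
theorem stmt6 (N : ℕ) (A B : Matrix (Fin N) (Fin N) ℂ)
    (hA : A.IsHermitian) (hB : B.IsHermitian) (hC : (A + B).IsHermitian)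
    (lam mu nu : Fin N → ℝ)
    (hlam : Antitone lam) (hmu : Antitone mu) (hnu : Antitone nu)
    (hlamE : Finset.univ.val.map lam = Finset.univ.val.map hA.eigenvalues)
    (hmuE : Finset.univ.val.map mu = Finset.univ.val.map hB.eigenvalues)
    (hnuE : Finset.univ.val.map nu = Finset.univ.val.map hC.eigenvalues) :
    ∀ i j : ℕ, ∀ h : i + j < N,
      nu ⟨i + j, h⟩ ≤ lam ⟨i, by omega⟩ + mu ⟨j, by omega⟩ ∧
      lam ⟨N - 1 - i, by omega⟩ + mu ⟨N - 1 - j, by omega⟩ ≤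
        nu ⟨N - 1 - (i + j), by omega⟩ := by
  intro i j h
  have hN : finrank ℂ (EuclideanSpace ℂ (Fin N)) = N := finrank_euclideanSpace_fin
  have hAB := hC.toEuclideanLin_eigenvectorBasis
  rw [map_add] at hAB
  constructor
  · refine le_add_of_two_mul_finrank_lt _ _ _ hA.toEuclideanLin_eigenvectorBasis
      hB.toEuclideanLin_eigenvectorBasis hAB ?_
    have hl := hlam.sub_le_card_filter_le hlamE ⟨i, by omega⟩
    have hm := hmu.sub_le_card_filter_le hmuE ⟨j, by omega⟩
    have hn := hnu.add_one_le_card_filter_ge hnuE ⟨i + j, h⟩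
    simp only at hl hm hn
    omega
  · refine add_le_of_two_mul_finrank_lt _ _ _ hA.toEuclideanLin_eigenvectorBasis
      hB.toEuclideanLin_eigenvectorBasis hAB ?_
    have hl := hlam.add_one_le_card_filter_ge hlamE ⟨N - 1 - i, by omega⟩
    have hm := hmu.add_one_le_card_filter_ge hmuE ⟨N - 1 - j, by omega⟩
    have hn := hnu.sub_le_card_filter_le hnuE ⟨N - 1 - (i + j), by omega⟩
    simp only at hl hm hn
    omega
end

section
/- Let s ∈ {−1,1}^N, R = ∑_{n≠0} (J_n s)(J_n s)^T, and assume R is invertible. Then the metric M(s) = s^T R^{-1} s satisfies M(s) ≥ 16/(9N³). -/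
/-!
Put `y = R⁻¹ s`. Since `R = ∑ₙ vₙ vₙᵀ` with `vₙ = Jₙ s`, we get `sᵀs = sᵀRy = ∑ₙ (sᵀvₙ)(vₙᵀy)` and
`M(s) = sᵀy = yᵀRy = ∑ₙ (vₙᵀy)²`, so Cauchy–Schwarz gives `N² ≤ (∑ₙ (sᵀvₙ)²) · M(s)`.
Each `|sᵀvₙ| ≤ N` and there are fewer than `2N` shifts, hence `M(s) ≥ 1/(2N) ≥ 16/(9N³)` once
`N ≥ 2`; for `N = 1` there are no shifts, so `R = 0` is not invertible.
-/

open Matrix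

/-- The `N×N` shift matrix `J_n`: ones on the `n`-th off-diagonal, zeros elsewhere. -/
def shiftJ (N : ℕ) (n : ℤ) : Matrix (Fin N) (Fin N) ℝ :=
  Matrix.of fun i j => if (j : ℤ) = (i : ℤ) + n then 1 else 0

/-- `R = ∑_{n≠0} (J_n s)(J_n s)ᵀ`. -/
noncomputable def Rmat (N : ℕ) (s : Fin N → ℝ) : Matrix (Fin N) (Fin N) ℝ :=
  ∑ n ∈ (Finset.Icc (1 - (N : ℤ)) ((N : ℤ) - 1)).erase 0,
    Matrix.vecMulVec (shiftJ N n *ᵥ s) (shiftJ N n *ᵥ s)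

open Finset

section GramSum

variable {ι m : Type*} [Fintype m]

theorem dotProduct_sum_vecMulVec_mulVec {R : Type*} [CommRing R] (F : Finset ι) (v : ι → m → R)
    (u w : m → R) :
    u ⬝ᵥ (∑ n ∈ F, vecMulVec (v n) (v n)) *ᵥ w = ∑ n ∈ F, (u ⬝ᵥ v n) * (v n ⬝ᵥ w) := by
  simp only [sum_mulVec, dotProduct_sum, vecMulVec_mulVec, op_smul_eq_smul, dotProduct_smul,
    smul_eq_mul, mul_comm]

theorem sq_dotProduct_le_mul_dotProduct_inv_mulVec [DecidableEq m]
    (F : Finset ι) (v : ι → m → ℝ) (x s : m → ℝ)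
    (hR : IsUnit (∑ n ∈ F, vecMulVec (v n) (v n)).det) :
    (x ⬝ᵥ s) ^ 2 ≤
      (∑ n ∈ F, (x ⬝ᵥ v n) ^ 2) * (s ⬝ᵥ (∑ n ∈ F, vecMulVec (v n) (v n))⁻¹ *ᵥ s) := by
  set R := ∑ n ∈ F, vecMulVec (v n) (v n)
  set y := R⁻¹ *ᵥ s
  have hRy : R *ᵥ y = s := by rw [mulVec_mulVec, mul_nonsing_inv _ hR, one_mulVec]
  have hx : x ⬝ᵥ s = ∑ n ∈ F, (x ⬝ᵥ v n) * (v n ⬝ᵥ y) := by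
    rw [← hRy, dotProduct_sum_vecMulVec_mulVec]
  have hy : s ⬝ᵥ y = ∑ n ∈ F, (v n ⬝ᵥ y) ^ 2 := by
    rw [← hRy, dotProduct_comm, dotProduct_sum_vecMulVec_mulVec]
    simp only [dotProduct_comm y, sq]
  rw [hx, hy]
  exact sum_mul_sq_le_sq_mul_sq F _ _

end GramSum

theorem abs_shiftJ_mulVec_apply_le_one {N : ℕ} (n : ℤ) {s : Fin N → ℝ}
    (hs : ∀ j, |s j| ≤ 1) (i : Fin N) : |(shiftJ N n *ᵥ s) i| ≤ 1 := by
  have hcard : #{j : Fin N | (j : ℤ) = i + n} ≤ 1 :=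
    card_le_one.mpr fun a ha b hb => by
      simp only [mem_filter] at ha hb
      omega
  calc |(shiftJ N n *ᵥ s) i| = |∑ j : Fin N, (if (j : ℤ) = i + n then 1 else 0) * s j| := rfl
    _ ≤ ∑ j : Fin N, |(if (j : ℤ) = i + n then 1 else 0) * s j| := abs_sum_le_sum_abs _ _
    _ ≤ ∑ j : Fin N, if (j : ℤ) = i + n then (1 : ℝ) else 0 := by
        refine sum_le_sum fun j _ => ?_
        split_ifs <;> simp [hs j]
    _ ≤ 1 := by rw [sum_boole]; exact_mod_cast hcard

theorem abs_dotProduct_shiftJ_mulVec_le {N : ℕ} (n : ℤ) {s : Fin N → ℝ}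
    (hs : ∀ j, |s j| ≤ 1) : |s ⬝ᵥ shiftJ N n *ᵥ s| ≤ N :=
  calc |s ⬝ᵥ shiftJ N n *ᵥ s| ≤ ∑ i, |s i * (shiftJ N n *ᵥ s) i| := abs_sum_le_sum_abs _ _
    _ ≤ ∑ _i : Fin N, (1 : ℝ) := sum_le_sum fun i _ => by
        rw [abs_mul]
        exact mul_le_one₀ (hs i) (abs_nonneg _) (abs_shiftJ_mulVec_apply_le_one n hs i)
    _ = N := by simp

theorem card_erase_zero_Icc_le (N : ℕ) : #((Icc (1 - (N : ℤ)) (N - 1)).erase 0) ≤ 2 * N := by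
  have := card_erase_le (a := (0 : ℤ)) (s := Icc (1 - (N : ℤ)) (N - 1))
  rw [Int.card_Icc] at this
  omega

theorem sum_sq_dotProduct_shiftJ_mulVec_le {N : ℕ} {s : Fin N → ℝ} (hs : ∀ j, |s j| ≤ 1) :
    ∑ n ∈ (Icc (1 - (N : ℤ)) (N - 1)).erase 0, (s ⬝ᵥ shiftJ N n *ᵥ s) ^ 2 ≤ 2 * (N : ℝ) ^ 3 :=
  calc ∑ n ∈ (Icc (1 - (N : ℤ)) (N - 1)).erase 0, (s ⬝ᵥ shiftJ N n *ᵥ s) ^ 2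
      ≤ ∑ _n ∈ (Icc (1 - (N : ℤ)) (N - 1)).erase 0, (N : ℝ) ^ 2 :=
        sum_le_sum fun n _ => sq_le_sq' (abs_le.mp (abs_dotProduct_shiftJ_mulVec_le n hs)).1
          (abs_le.mp (abs_dotProduct_shiftJ_mulVec_le n hs)).2
    _ ≤ 2 * N * (N : ℝ) ^ 2 := by
        rw [sum_const, nsmul_eq_mul]
        gcongr
        exact_mod_cast card_erase_zero_Icc_le N
    _ = 2 * (N : ℝ) ^ 3 := by ring

theorem Rmat_one (s : Fin 1 → ℝ) : Rmat 1 s = 0 := by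
  rw [Rmat, show (Icc (1 - ((1 : ℕ) : ℤ)) ((1 : ℕ) - 1)).erase 0 = ∅ by decide, sum_empty]

theorem stmt10_general (N : ℕ) (s : Fin N → ℝ)
    (hs : ∀ i, s i = 1 ∨ s i = -1) (hinv : IsUnit (Rmat N s).det) :
    16 / (9 * (N : ℝ) ^ 3) ≤ s ⬝ᵥ (Rmat N s)⁻¹ *ᵥ s := by
  obtain rfl | rfl | hN := (by omega : N = 0 ∨ N = 1 ∨ 2 ≤ N)
  · simp -- both sides are `0`, since `16 / 0 = 0`
  · simp [Rmat_one] at hinv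
  set F := (Icc (1 - (N : ℤ)) (N - 1)).erase 0
  set M := s ⬝ᵥ (Rmat N s)⁻¹ *ᵥ s
  have hs_abs : ∀ i, |s i| ≤ 1 := fun i => by rcases hs i with h | h <;> simp [h]
  have hss : s ⬝ᵥ s = N := by
    have hsq : ∀ i, s i * s i = 1 := fun i => by rcases hs i with h | h <;> simp [h]
    simp [dotProduct, hsq]
  have hCS : (s ⬝ᵥ s) ^ 2 ≤ (∑ n ∈ F, (s ⬝ᵥ shiftJ N n *ᵥ s) ^ 2) * M :=
    sq_dotProduct_le_mul_dotProduct_inv_mulVec F _ s s hinv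
  rw [hss] at hCS
  have hA : ∑ n ∈ F, (s ⬝ᵥ shiftJ N n *ᵥ s) ^ 2 ≤ 2 * (N : ℝ) ^ 3 :=
    sum_sq_dotProduct_shiftJ_mulVec_le hs_abs
  have hN' : (2 : ℝ) ≤ N := by exact_mod_cast hN
  have hM : 0 < M := pos_of_mul_pos_right (by nlinarith) (sum_nonneg fun _ _ => sq_nonneg _)
  have hlower : (N : ℝ) ^ 2 ≤ 2 * N ^ 3 * M := hCS.trans (mul_le_mul_of_nonneg_right hA hM.le)
  rw [div_le_iff₀ (by positivity)]
  nlinarith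

/-- For `s ∈ {−1,1}^N` with `R` invertible, the metric `M(s) = sᵀ R⁻¹ s`
satisfies `M(s) ≥ 16/(9N³)`. -/
theorem stmt10 (N : ℕ) (hN : 0 < N) (s : Fin N → ℝ)
    (hs : ∀ i, s i = 1 ∨ s i = -1) (hinv : IsUnit (Rmat N s).det) :
    16 / (9 * (N : ℝ) ^ 3) ≤ s ⬝ᵥ (Rmat N s)⁻¹ *ᵥ s :=
  stmt10_general N s hs hinv
end

section
/- Let C = ([a₁, a₂]^T, [b₁, b₂]^T) be an ideal complementary code set with J = 2 users, M = 2 element codes each, of length N (i.e., all sums CAF, CCF, FCF in the complementary-code sense vanish identically). Then C' = ([−b₂, −b₁]^T, [a₂, a₁]^T) is also an ideal complementary code set. -/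
/-- Cyclic correlation of `x` and `y` at shift `v` (indices mod `N`). -/
def cyc (N : ℕ) [NeZero N] (x y : Fin N → ℝ) (v : ℕ) : ℝ :=
  ∑ n : Fin N, x n * y (n + (Fin.ofNat N v))

/-- Flipped correlation of `x` and `y` at shift `v`: wrapped terms get sign `−1`. -/
def flp (N : ℕ) [NeZero N] (x y : Fin N → ℝ) (v : ℕ) : ℝ :=
  ∑ n : Fin N, (if (n : ℕ) + v < N then (1 : ℝ) else -1) *
    (x n * y (n + (Fin.ofNat N v)))

/-- Ideal complementary code set with `J = 2` users and `M = 2` element codes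
`a₁, a₂` (user A) and `b₁, b₂` (user B): all summed cyclic auto-correlations at
nonzero shifts, all summed cyclic cross-correlations at every shift, and all
summed flipped correlations at nonzero shifts vanish. -/
def IsIdealCC (N : ℕ) [NeZero N] (a₁ a₂ b₁ b₂ : Fin N → ℝ) : Prop :=
  (∀ v : ℕ, 1 ≤ v → v < N → cyc N a₁ a₁ v + cyc N a₂ a₂ v = 0) ∧
  (∀ v : ℕ, 1 ≤ v → v < N → cyc N b₁ b₁ v + cyc N b₂ b₂ v = 0) ∧
  (∀ v : ℕ, v < N → cyc N a₁ b₁ v + cyc N a₂ b₂ v = 0) ∧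
  (∀ v : ℕ, 1 ≤ v → v < N → flp N a₁ a₁ v + flp N a₂ a₂ v = 0) ∧
  (∀ v : ℕ, 1 ≤ v → v < N → flp N b₁ b₁ v + flp N b₂ b₂ v = 0) ∧
  (∀ v : ℕ, 1 ≤ v → v < N → flp N a₁ b₁ v + flp N a₂ b₂ v = 0)

/-! Swapping the two users turns the auto-correlation conditions of one user into those of the
other, and negating a user's codes leaves its auto-correlations unchanged. For the cross
conditions, exchanging the two arguments of a cyclic correlation replaces the shift `v` by `-v`
modulo `N`; for a flipped correlation it replaces `v` by `N - v` and reverses the sign of every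
term, because exactly the terms that did not wrap around now wrap around. -/

section Correlation

variable {N : ℕ} [NeZero N]

lemma Fin.ofNat_sub_eq_neg {v : ℕ} (hv : v ≤ N) : Fin.ofNat N (N - v) = -Fin.ofNat N v := by
  rw [eq_neg_iff_add_eq_zero]
  ext
  simp [Fin.val_add, Nat.sub_add_cancel hv]

lemma cyc_neg_neg (x y : Fin N → ℝ) (v : ℕ) :
    cyc N (fun n => -(x n)) (fun n => -(y n)) v = cyc N x y v := by
  simp [cyc]

lemma cyc_neg_left (x y : Fin N → ℝ) (v : ℕ) :
    cyc N (fun n => -(x n)) y v = -cyc N x y v := by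
  simp [cyc]

lemma flp_neg_neg (x y : Fin N → ℝ) (v : ℕ) :
    flp N (fun n => -(x n)) (fun n => -(y n)) v = flp N x y v := by
  simp [flp]

lemma flp_neg_left (x y : Fin N → ℝ) (v : ℕ) :
    flp N (fun n => -(x n)) y v = -flp N x y v := by
  simp [flp]

lemma cyc_comm (x y : Fin N → ℝ) (v : ℕ) :
    cyc N x y v = cyc N y x ↑(-Fin.ofNat N v) := by
  unfold cyc
  rw [Fin.ofNat_val_eq_self]
  exact Fintype.sum_equiv (Equiv.addRight (Fin.ofNat N v)) _ _ fun n => by simp [mul_comm]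

lemma flp_comm (x y : Fin N → ℝ) {v : ℕ} (hv : v ≤ N) :
    flp N x y v = -flp N y x (N - v) := by
  unfold flp
  rw [Fin.ofNat_sub_eq_neg hv, ← Finset.sum_neg_distrib]
  refine Fintype.sum_equiv (Equiv.addRight (Fin.ofNat N v)) _ _ fun n => ?_
  have hval : (n + Fin.ofNat N v).val = (n.val + v) % N := by simp [Fin.val_add]
  simp only [Equiv.coe_addRight, add_neg_cancel_right, hval]
  by_cases hwrap : n.val + v < N
  · rw [Nat.mod_eq_of_lt hwrap, if_pos hwrap, if_neg (by omega)]
    ring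
  · rw [Nat.mod_eq_sub_mod (by omega), Nat.mod_eq_of_lt (by omega), if_neg hwrap,
      if_pos (by omega)]
    ring

end Correlation

/-- If `([a₁,a₂],[b₁,b₂])` is an ideal complementary code set, then so is
`([−b₂,−b₁],[a₂,a₁])`. -/
theorem stmt17 (N : ℕ) [NeZero N] (a₁ a₂ b₁ b₂ : Fin N → ℝ)
    (h : IsIdealCC N a₁ a₂ b₁ b₂) :
    IsIdealCC N (fun n => -(b₂ n)) (fun n => -(b₁ n)) a₂ a₁ := by
  obtain ⟨hA, hB, hX, hFA, hFB, hFX⟩ := h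
  refine ⟨fun v h1 h2 => ?_, fun v h1 h2 => ?_, fun v hv => ?_, fun v h1 h2 => ?_,
    fun v h1 h2 => ?_, fun v h1 h2 => ?_⟩
  · rw [cyc_neg_neg, cyc_neg_neg, add_comm]
    exact hB v h1 h2
  · rw [add_comm]
    exact hA v h1 h2
  · rw [cyc_neg_left, cyc_neg_left, cyc_comm b₂, cyc_comm b₁, ← neg_add, add_comm,
      hX _ (Fin.is_lt _), neg_zero]
  · rw [flp_neg_neg, flp_neg_neg, add_comm]
    exact hFB v h1 h2
  · rw [add_comm]
    exact hFA v h1 h2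
  · rw [flp_neg_left, flp_neg_left, flp_comm b₂ a₂ h2.le, flp_comm b₁ a₁ h2.le, neg_neg, neg_neg,
      add_comm]
    exact hFX (N - v) (by omega) (by omega)
end
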